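/- arXiv:1307.8418 — 5 statements merged into one kernel-verified Lean document; each statement's English description precedes it below -/
import Mathlib

section
/- Let V be a finite-dimensional Z/2-graded complex vector space with even part V₊ and odd part V₋, and let A = A₊ ⊕ A₋ be a homogeneous (even) endomorphism of V, where A₊, A₋ are the restrictions to V₊, V₋. Suppose A₊ and A₋ do not have the same eigenvalues (counted with multiplicity) on the circle {|λ| = ρ(A)}, where ρ(A) is the spectral radius of A. Then limsup_{n→∞} |sTr(Aⁿ)|^{1/n} = ρ(A), where sTr(Aⁿ) = Tr(A₊ⁿ) − Tr(A₋ⁿ) is the supertrace. -/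
/-!
Over `ℂ`, the trace of `fⁿ` is the `n`-th power sum of the eigenvalues of `f` counted with
multiplicity: on the generalized eigenspace of `μ`, `f - μ` is nilpotent, so `fⁿ` has trace
`μⁿ` times its dimension, which is the multiplicity of `μ` as a root of the characteristic
polynomial. Hence `sTr Aⁿ = ∑ μ, c μ * μⁿ`, where `c μ` is the multiplicity of `μ` in `A⁺` minus
that in `A⁻`.

The bound `‖∑ c μ μⁿ‖ ≤ C ρⁿ` gives `limsup ≤ ρ`. If the limsup were smaller than `ρ`, the sum
would be `o(ρⁿ)`, and so would its part over the circle `‖μ‖ = ρ`, the rest decaying geometrically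
relative to `ρⁿ`. An exponential sum `aₙ = ∑ c w wⁿ` with all `‖w‖ = ρ` which is `o(ρⁿ)` is zero:
`aₙ₊₁ - w₀ aₙ` is again `o(ρⁿ)` and no longer involves `w₀`, so by induction every `c w` with
`w ≠ w₀` vanishes, after which `‖aₙ‖ / ρⁿ = ‖c w₀‖`. This contradicts the hypothesis that some
eigenvalue on the circle has different multiplicities in `A⁺` and `A⁻`.
-/

open Filter Module Topology

lemma isNilpotent_pow_sub_algebraMap_pow {R A : Type*} [CommRing R] [Ring A] [Algebra R A]
    {g : A} {μ : R} (hg : IsNilpotent (g - algebraMap R A μ)) (n : ℕ) :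
    IsNilpotent (g ^ n - algebraMap R A (μ ^ n)) := by
  set a := algebraMap R A μ
  have hga : Commute g a := Algebra.commute_algebraMap_right μ g
  have hg' : Commute g (g - a) := (Commute.refl g).sub_right hga
  have ha' : Commute a (g - a) := hga.symm.sub_right (Commute.refl a)
  rw [map_pow, ← hga.geom_sum₂_mul]
  exact Commute.isNilpotent_mul_left
    (Commute.sum_left _ _ _ fun i _ => (hg'.pow_left i).mul_left (ha'.pow_left _)) hg

namespace Module.End

variable {K V : Type*} [Field K] [AddCommGroup V] [Module K V] [FiniteDimensional K V]

lemma trace_eq_mul_finrank_of_isNilpotent_sub {g : End K V} {μ : K}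
    (hg : IsNilpotent (g - algebraMap K _ μ)) :
    LinearMap.trace K V g = μ * finrank K V := by
  simpa [Module.End.one_eq_id] using
    LinearMap.trace_comp_eq_mul_of_commute_of_isNilpotent μ (Commute.one_left g) hg

lemma trace_restrict_pow_maxGenEigenspace (f : End K V) (μ : K) (n : ℕ) :
    LinearMap.trace K _ ((f ^ n).restrict
      (f.mapsTo_maxGenEigenspace_of_comm ((Commute.refl f).pow_right n) μ)) =
      μ ^ n * f.charpoly.rootMultiplicity μ := by
  have hf := f.mapsTo_maxGenEigenspace_of_comm (Commute.refl f) μ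
  have hnil : IsNilpotent (f.restrict hf - algebraMap K _ μ) := by
    convert f.isNilpotent_restrict_maxGenEigenspace_sub_algebraMap μ
    ext; rfl
  rw [← Module.End.pow_restrict n hf, trace_eq_mul_finrank_of_isNilpotent_sub
    (isNilpotent_pow_sub_algebraMap_pow hnil n), LinearMap.finrank_maxGenEigenspace_eq]

theorem trace_pow_eq_sum_roots_charpoly [IsAlgClosed K] (f : End K V) (n : ℕ) :
    LinearMap.trace K V (f ^ n) = (f.charpoly.roots.map (· ^ n)).sum := by
  classical
  have hds := DirectSum.isInternal_submodule_of_iSupIndep_of_iSup_eq_top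
    f.independent_maxGenEigenspace f.iSup_maxGenEigenspace_eq_top
  have hfin := WellFoundedGT.finite_ne_bot_of_iSupIndep f.independent_maxGenEigenspace
  have hsupp : hfin.toFinset = f.charpoly.roots.toFinset := by
    ext μ
    simp [← Multiset.count_ne_zero, Polynomial.count_roots,
      ← LinearMap.finrank_maxGenEigenspace_eq, Submodule.finrank_eq_zero]
  rw [LinearMap.trace_eq_sum_trace_restrict' hds hfin
      (f.mapsTo_maxGenEigenspace_of_comm ((Commute.refl f).pow_right n) ·),
    hsupp, Finset.sum_multiset_map_count]
  simp_rw [trace_restrict_pow_maxGenEigenspace, Polynomial.count_roots, nsmul_eq_mul, mul_comm]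

end Module.End

namespace Multiset

variable {α : Type*} [DecidableEq α]

theorem sum_map_sub_sum_map_eq_sum_count_sub_count_mul {R : Type*} [CommRing R]
    (S T : Multiset α) (f : α → R) :
    (S.map f).sum - (T.map f).sum =
      ∑ x ∈ (S + T).toFinset, ((S.count x : R) - T.count x) * f x := by
  have hcount {U : Multiset α} (hU : U ≤ S + T) :
      (U.map f).sum = ∑ x ∈ (S + T).toFinset, (U.count x : R) * f x := by
    rw [Finset.sum_multiset_map_count, Finset.sum_subset (toFinset_subset.mpr (subset_of_le hU))
      fun x _ hx => by simp [count_eq_zero.mpr (by simpa using hx)]]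
    simp [nsmul_eq_mul]
  simp_rw [hcount (le_add_right S T), hcount (le_add_left T S), sub_mul, Finset.sum_sub_distrib]

theorem exists_count_ne_of_filter_ne {p : α → Prop} [DecidablePred p] {S T : Multiset α}
    (h : S.filter p ≠ T.filter p) : ∃ x ∈ (S + T).toFinset, p x ∧ S.count x ≠ T.count x := by
  obtain ⟨x, hx⟩ : ∃ x, (S.filter p).count x ≠ (T.filter p).count x := by
    contrapose! h
    exact ext.mpr h
  by_cases hpx : p x
  · simp only [count_filter, hpx, if_true] at hx
    refine ⟨x, ?_, hpx, hx⟩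
    by_contra hxST
    simp only [mem_toFinset, mem_add, not_or] at hxST
    exact hx (by rw [count_eq_zero.mpr hxST.1, count_eq_zero.mpr hxST.2])
  · simp [hpx] at hx

end Multiset

section PowerSums

variable {𝕜 : Type*} [NormedField 𝕜]

theorem Finset.norm_sum_mul_pow_le {F : Finset 𝕜} {ρ : ℝ} (hF : ∀ μ ∈ F, ‖μ‖ ≤ ρ) (c : 𝕜 → 𝕜)
    (n : ℕ) : ‖∑ μ ∈ F, c μ * μ ^ n‖ ≤ (∑ μ ∈ F, ‖c μ‖) * ρ ^ n := by
  rw [Finset.sum_mul]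
  refine (norm_sum_le _ _).trans (Finset.sum_le_sum fun μ hμ => ?_)
  rw [norm_mul, norm_pow]
  gcongr
  exact hF μ hμ

theorem Finset.tendsto_norm_sum_mul_pow_div_pow_of_norm_lt {F : Finset 𝕜} {ρ : ℝ}
    (hF : ∀ μ ∈ F, ‖μ‖ < ρ) (c : 𝕜 → 𝕜) :
    Tendsto (fun n : ℕ => ‖∑ μ ∈ F, c μ * μ ^ n‖ / ρ ^ n) atTop (𝓝 0) := by
  rcases F.eq_empty_or_nonempty with rfl | ⟨μ₀, hμ₀⟩
  · simp
  have hρ : 0 < ρ := (norm_nonneg μ₀).trans_lt (hF μ₀ hμ₀)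
  have hbound (n : ℕ) : ‖∑ μ ∈ F, c μ * μ ^ n‖ / ρ ^ n ≤ ∑ μ ∈ F, ‖c μ‖ * (‖μ‖ / ρ) ^ n := by
    rw [div_le_iff₀ (by positivity), Finset.sum_mul]
    refine (norm_sum_le _ _).trans_eq (Finset.sum_congr rfl fun μ _ => ?_)
    rw [norm_mul, norm_pow, div_pow, mul_assoc, div_mul_cancel₀ _ (by positivity)]
  refine squeeze_zero (fun n => by positivity) hbound ?_
  rw [← Finset.sum_const_zero (s := F)]
  refine tendsto_finsetSum F fun μ hμ => ?_
  simpa using (tendsto_pow_atTop_nhds_zero_of_lt_one (by positivity)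
    ((div_lt_one hρ).mpr (hF μ hμ))).const_mul ‖c μ‖

theorem Finset.eq_zero_of_tendsto_norm_sum_mul_pow_div_pow {ρ : ℝ} (hρ : 0 < ρ) (F : Finset 𝕜)
    (hF : ∀ w ∈ F, ‖w‖ = ρ) {c : 𝕜 → 𝕜}
    (h : Tendsto (fun n : ℕ => ‖∑ w ∈ F, c w * w ^ n‖ / ρ ^ n) atTop (𝓝 0)) :
    ∀ w ∈ F, c w = 0 := by
  classical
  induction F using Finset.induction_on generalizing c with
  | empty => simp
  | insert w₀ s hw₀ ih =>
    set a : ℕ → 𝕜 := fun n => ∑ w ∈ insert w₀ s, c w * w ^ n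
    have hshift (n : ℕ) : a (n + 1) - w₀ * a n = ∑ w ∈ s, c w * (w - w₀) * w ^ n := by
      simp only [a, Finset.sum_insert hw₀, mul_add, Finset.mul_sum, add_sub_add_comm,
        ← Finset.sum_sub_distrib]
      rw [show c w₀ * w₀ ^ (n + 1) - w₀ * (c w₀ * w₀ ^ n) = 0 by ring, zero_add]
      exact Finset.sum_congr rfl fun w _ => by ring
    have hshift_small : Tendsto (fun n : ℕ => ‖∑ w ∈ s, c w * (w - w₀) * w ^ n‖ / ρ ^ n)
        atTop (𝓝 0) := by
      refine squeeze_zero (fun n => by positivity) (fun n => ?_)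
        (by simpa using ((h.comp (tendsto_add_atTop_nat 1)).add h).const_mul ρ)
      have hnorm : ‖a (n + 1) - w₀ * a n‖ ≤ ‖a (n + 1)‖ + ρ * ‖a n‖ := by
        rw [← hF w₀ (Finset.mem_insert_self _ _), ← norm_mul]
        exact norm_sub_le _ _
      calc ‖∑ w ∈ s, c w * (w - w₀) * w ^ n‖ / ρ ^ n
          ≤ (‖a (n + 1)‖ + ρ * ‖a n‖) / ρ ^ n := by rw [← hshift]; gcongr
        _ = ρ * (‖a (n + 1)‖ / ρ ^ (n + 1) + ‖a n‖ / ρ ^ n) := by field_simp; ring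
    have hs : ∀ w ∈ s, c w = 0 := fun w hw =>
      (mul_eq_zero.mp (ih (fun w hw => hF w (Finset.mem_insert_of_mem hw)) hshift_small w hw))
        |>.resolve_right (sub_ne_zero.mpr (ne_of_mem_of_not_mem hw hw₀))
    have hw₀ : ‖c w₀‖ = 0 := by
      refine tendsto_nhds_unique (tendsto_const_nhds.congr fun n => ?_) h
      rw [Finset.sum_insert hw₀, Finset.sum_eq_zero fun w hw => by rw [hs w hw, zero_mul],
        add_zero, norm_mul, norm_pow, hF w₀ (Finset.mem_insert_self _ _),
        mul_div_cancel_right₀ _ (by positivity)]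
    intro w hw
    rcases Finset.mem_insert.mp hw with rfl | hw
    · exact norm_eq_zero.mp hw₀
    · exact hs w hw

theorem isBoundedUnder_and_limsup_rpow_one_div_le {u : ℕ → ℝ} {K ρ : ℝ} (hu : ∀ n, 0 ≤ u n)
    (hK : ∀ n, u n ≤ K * ρ ^ n) (hρ : 0 ≤ ρ) :
    IsBoundedUnder (· ≤ ·) atTop (fun n : ℕ => u n ^ ((1 : ℝ) / n)) ∧
      limsup (fun n : ℕ => u n ^ ((1 : ℝ) / n)) atTop ≤ ρ := by
  have hK₀ : 0 ≤ K := by simpa using (hu 0).trans (hK 0)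
  have hle : (fun n : ℕ => u n ^ ((1 : ℝ) / n)) ≤ᶠ[atTop]
      fun n : ℕ => (K + 1) ^ ((1 : ℝ) / n) * ρ := by
    filter_upwards [eventually_ne_atTop 0] with n hn
    calc u n ^ ((1 : ℝ) / n) ≤ ((K + 1) * ρ ^ n) ^ ((1 : ℝ) / n) := by
          gcongr
          · exact hu n
          · exact (hK n).trans (by gcongr; linarith)
      _ = (K + 1) ^ ((1 : ℝ) / n) * ρ := by
          rw [Real.mul_rpow (by positivity) (by positivity), one_div,
            Real.pow_rpow_inv_natCast hρ hn]
  have htend : Tendsto (fun n : ℕ => (K + 1) ^ ((1 : ℝ) / n) * ρ) atTop (𝓝 ρ) := by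
    simpa using ((tendsto_const_nhds (x := K + 1)).rpow tendsto_one_div_atTop_nhds_zero_nat
      (Or.inl (by positivity))).mul_const ρ
  refine ⟨htend.isBoundedUnder_le.mono_le hle, ?_⟩
  exact (limsup_le_limsup hle (isCoboundedUnder_le_of_le atTop fun n => by
    have := hu n; positivity) htend.isBoundedUnder_le).trans_eq htend.limsup_eq

theorem Finset.limsup_norm_sum_mul_pow_rpow_one_div {F : Finset 𝕜} {c : 𝕜 → 𝕜} {ρ : ℝ}
    (hF : ∀ μ ∈ F, ‖μ‖ ≤ ρ) (hc : ∃ μ ∈ F, ‖μ‖ = ρ ∧ c μ ≠ 0) :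
    limsup (fun n : ℕ => ‖∑ μ ∈ F, c μ * μ ^ n‖ ^ ((1 : ℝ) / n)) atTop = ρ := by
  obtain ⟨μ₀, hμ₀F, hμ₀, hcμ₀⟩ := hc
  set a : ℕ → 𝕜 := fun n => ∑ μ ∈ F, c μ * μ ^ n
  obtain ⟨hbdd, hle⟩ := isBoundedUnder_and_limsup_rpow_one_div_le (fun n => norm_nonneg (a n))
    (F.norm_sum_mul_pow_le hF c) (hμ₀ ▸ norm_nonneg μ₀)
  refine hle.antisymm (le_of_not_gt fun hlt => hcμ₀ ?_)
  have hL₀ : 0 ≤ limsup (fun n : ℕ => ‖a n‖ ^ ((1 : ℝ) / n)) atTop :=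
    le_limsup_of_frequently_le (Frequently.of_forall fun n => by positivity) hbdd
  have hρ : 0 < ρ := hL₀.trans_lt hlt
  obtain ⟨r, hLr, hrρ⟩ := _root_.exists_between hlt
  have hr : 0 < r := hL₀.trans_lt hLr
  have hsmall : Tendsto (fun n : ℕ => ‖a n‖ / ρ ^ n) atTop (𝓝 0) := by
    refine squeeze_zero' (Eventually.of_forall fun n => by positivity) ?_
      (tendsto_pow_atTop_nhds_zero_of_lt_one (by positivity) ((div_lt_one hρ).mpr hrρ))
    filter_upwards [eventually_lt_of_limsup_lt hLr hbdd, eventually_ne_atTop 0] with n hn hn₀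
    rw [div_pow, div_le_div_iff_of_pos_right (by positivity),
      ← Real.rpow_inv_natCast_pow (norm_nonneg (a n)) hn₀, ← one_div]
    gcongr
  set F₀ := F.filter (fun μ => ‖μ‖ = ρ)
  have hrest := (F.filter (fun μ => ¬‖μ‖ = ρ)).tendsto_norm_sum_mul_pow_div_pow_of_norm_lt
    (fun μ hμ => (hF μ (Finset.mem_filter.mp hμ).1).lt_of_ne (Finset.mem_filter.mp hμ).2) c
  have htop : Tendsto (fun n : ℕ => ‖∑ μ ∈ F₀, c μ * μ ^ n‖ / ρ ^ n) atTop (𝓝 0) := by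
    refine squeeze_zero (fun n => by positivity) (fun n => ?_) (by simpa using hsmall.add hrest)
    have hsplit : ∑ μ ∈ F₀, c μ * μ ^ n =
        a n - ∑ μ ∈ F.filter (fun μ => ¬‖μ‖ = ρ), c μ * μ ^ n :=
      eq_sub_of_add_eq (Finset.sum_filter_add_sum_filter_not F _ _)
    rw [← add_div, hsplit]
    gcongr
    exact norm_sub_le _ _
  exact F₀.eq_zero_of_tendsto_norm_sum_mul_pow_div_pow hρ (fun μ hμ => (Finset.mem_filter.mp hμ).2)
    htop μ₀ (Finset.mem_filter.mpr ⟨hμ₀F, hμ₀⟩)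

end PowerSums

/-- Let `V = V⁺ ⊕ V⁻` be a finite-dimensional `ℤ/2`-graded complex vector space and
`A = A⁺ ⊕ A⁻` an even endomorphism. Let `ρ` be the spectral radius of `A` (the greatest
modulus of an eigenvalue of `A⁺` or `A⁻`, or `0` if there are none). If `A⁺` and `A⁻` do
not have the same eigenvalues with multiplicity on the circle `{|λ| = ρ}`, then
`limsup |sTr Aⁿ|^{1/n} = ρ`, where `sTr Aⁿ = Tr (A⁺)ⁿ - Tr (A⁻)ⁿ`. -/
theorem supertrace_spectral_radius
    (Vp Vm : Type) [AddCommGroup Vp] [Module ℂ Vp] [FiniteDimensional ℂ Vp]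
    [AddCommGroup Vm] [Module ℂ Vm] [FiniteDimensional ℂ Vm]
    (Ap : Vp →ₗ[ℂ] Vp) (Am : Vm →ₗ[ℂ] Vm) (ρ : ℝ)
    (hρ : IsGreatest (insert 0
      {x : ℝ | ∃ μ ∈ (LinearMap.charpoly Ap).roots + (LinearMap.charpoly Am).roots,
        ‖μ‖ = x}) ρ)
    (hne : ((LinearMap.charpoly Ap).roots.filter (fun μ => ‖μ‖ = ρ)) ≠
           ((LinearMap.charpoly Am).roots.filter (fun μ => ‖μ‖ = ρ))) :
    Filter.limsup
      (fun n : ℕ =>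
        ‖LinearMap.trace ℂ Vp (Ap ^ n) - LinearMap.trace ℂ Vm (Am ^ n)‖
          ^ ((1 : ℝ) / n)) Filter.atTop = ρ := by
  classical
  simp_rw [Module.End.trace_pow_eq_sum_roots_charpoly,
    Multiset.sum_map_sub_sum_map_eq_sum_count_sub_count_mul]
  obtain ⟨μ, hμ, hμρ, hcount⟩ := Multiset.exists_count_ne_of_filter_ne hne
  exact Finset.limsup_norm_sum_mul_pow_rpow_one_div
    (fun μ hμ => hρ.2 (Or.inr ⟨μ, Multiset.mem_toFinset.mp hμ, rfl⟩))
    ⟨μ, hμ, hμρ, sub_ne_zero.mpr (by exact_mod_cast hcount)⟩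
end

section
/- Let α₁,…,α_m and β₁,…,β_n be complex numbers, and suppose the multisets {α_k : |α_k| = ρ} and {β_l : |β_l| = ρ} differ, where ρ = max(max_k |α_k|, max_l |β_l|) > 0. Then limsup_{N→∞} |Σ_k α_k^N − Σ_l β_l^N|^{1/N} = ρ. -/
/-!
Let `v` be a point of modulus `ρ` whose multiplicities in `α` and `β` differ. For `‖z‖ ≤ ‖v‖`
the Cesàro means of `(z / v) ^ N` tend to `1` if `z = v` and to `0` otherwise, so the Cesàro
means of `(Σ α_k ^ N - Σ β_l ^ N) / v ^ N` tend to the difference of the multiplicities of `v`,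
which is nonzero. Hence the sequence itself does not tend to zero:
`ε ρ ^ N ≤ |Σ α_k ^ N - Σ β_l ^ N|` for infinitely many `N`, while trivially
`|Σ α_k ^ N - Σ β_l ^ N| ≤ (m + n) ρ ^ N`; taking `N`-th roots gives the limsup.
-/

open Filter Topology Finset

section Cesaro

variable {𝕜 : Type*} [RCLike 𝕜]

lemma tendsto_cesaro_pow {x : 𝕜} (hx : ‖x‖ ≤ 1) :
    Tendsto (fun M : ℕ => (M⁻¹ : ℝ) • ∑ N ∈ range M, x ^ N) atTop
      (𝓝 (if x = 1 then 1 else 0)) := by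
  split_ifs with h1
  · subst h1
    refine tendsto_const_nhds.congr' ?_
    filter_upwards [eventually_ne_atTop 0] with M hM
    rw [RCLike.real_smul_eq_coe_mul]
    simp [hM]
  · have hbdd : ∀ M, ‖∑ N ∈ range M, x ^ N‖ ≤ 2 / ‖x - 1‖ := fun M => by
      rw [geom_sum_eq h1, norm_div]
      gcongr
      calc ‖x ^ M - 1‖ ≤ ‖x ^ M‖ + ‖(1 : 𝕜)‖ := norm_sub_le _ _
        _ ≤ 2 := by rw [norm_pow, norm_one]; linarith [pow_le_one₀ (norm_nonneg x) hx (n := M)]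
    exact tendsto_inv_atTop_nhds_zero_nat.zero_smul_isBoundedUnder_le
      (isBoundedUnder_of ⟨_, fun M => hbdd M⟩)

lemma tendsto_cesaro_sum_map_pow_div (s : Multiset 𝕜) {v : 𝕜} (hv : v ≠ 0)
    (hs : ∀ z ∈ s, ‖z‖ ≤ ‖v‖) :
    Tendsto (fun M : ℕ => (M⁻¹ : ℝ) • ∑ N ∈ range M, (s.map (· ^ N)).sum / v ^ N) atTop
      (𝓝 (s.count v)) := by
  induction s using Multiset.induction_on with
  | empty => simp
  | cons a s ih =>
    have ha : ‖a / v‖ ≤ 1 := by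
      rw [norm_div]
      exact div_le_one_of_le₀ (hs a (Multiset.mem_cons_self a s)) (norm_nonneg v)
    have := (ih fun z hz => hs z (Multiset.mem_cons_of_mem hz)).add (tendsto_cesaro_pow ha)
    convert this using 2 with M
    · simp [add_div, div_pow, Finset.sum_add_distrib, smul_add, add_comm]
    · simp [Multiset.count_cons, div_eq_one_iff_eq hv, eq_comm]

end Cesaro

lemma exists_frequently_le_norm_of_tendsto_cesaro {E : Type*} [NormedAddCommGroup E]
    [NormedSpace ℝ E] {u : ℕ → E} {l : E} (hl : l ≠ 0)
    (h : Tendsto (fun M : ℕ => (M⁻¹ : ℝ) • ∑ N ∈ range M, u N) atTop (𝓝 l)) :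
    ∃ ε > 0, ∃ᶠ N in atTop, ε ≤ ‖u N‖ := by
  by_contra! hsmall
  have hu : Tendsto u atTop (𝓝 0) := NormedAddGroup.tendsto_nhds_zero.2 hsmall
  exact hl (tendsto_nhds_unique h hu.cesaro_smul)

lemma norm_sum_map_pow_le {𝕜 : Type*} [NormedDivisionRing 𝕜] (s : Multiset 𝕜) {ρ : ℝ}
    (hs : ∀ z ∈ s, ‖z‖ ≤ ρ) (N : ℕ) :
    ‖(s.map (· ^ N)).sum‖ ≤ Multiset.card s * ρ ^ N := by
  calc ‖(s.map (· ^ N)).sum‖ ≤ (s.map fun z => ‖z‖ ^ N).sum := by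
        simpa [Multiset.map_map, Function.comp_def] using norm_multiset_sum_le (s.map (· ^ N))
    _ ≤ (s.map fun _ => ρ ^ N).sum :=
        Multiset.sum_map_le_sum_map _ _ fun z hz => pow_le_pow_left₀ (norm_nonneg z) (hs z hz) N
    _ = Multiset.card s * ρ ^ N := by simp

lemma tendsto_mul_pow_rpow_one_div {C ρ : ℝ} (hC : 0 < C) (hρ : 0 ≤ ρ) :
    Tendsto (fun N : ℕ => (C * ρ ^ N) ^ ((1 : ℝ) / N)) atTop (𝓝 ρ) := by
  have hroot : Tendsto (fun N : ℕ => C ^ ((1 : ℝ) / N)) atTop (𝓝 1) := by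
    simpa [Function.comp_def] using
      (Real.continuousAt_const_rpow hC.ne' (b := 0)).tendsto.comp
        tendsto_one_div_atTop_nhds_zero_nat
  refine (by simpa using hroot.mul_const ρ : Tendsto _ _ (𝓝 ρ)).congr' ?_
  filter_upwards [eventually_ne_atTop 0] with N hN
  rw [Real.mul_rpow hC.le (by positivity), one_div, Real.pow_rpow_inv_natCast hρ hN]

lemma limsup_rpow_one_div_eq {a : ℕ → ℝ} {C ε ρ : ℝ} (ha : ∀ N, 0 ≤ a N) (hρ : 0 ≤ ρ)
    (hε : 0 < ε) (hup : ∀ N, a N ≤ C * ρ ^ N) (hlow : ∃ᶠ N in atTop, ε * ρ ^ N ≤ a N) :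
    limsup (fun N : ℕ => a N ^ ((1 : ℝ) / N)) atTop = ρ := by
  have hmono {x y : ℝ} (hx : 0 ≤ x) (hxy : x ≤ y) (N : ℕ) :
      x ^ ((1 : ℝ) / N) ≤ y ^ ((1 : ℝ) / N) :=
    Real.rpow_le_rpow hx hxy (by positivity)
  have hC : 0 < max C 1 := lt_max_of_lt_right one_pos
  have hupper := tendsto_mul_pow_rpow_one_div hC hρ
  have hlower := tendsto_mul_pow_rpow_one_div hε hρ
  have hle : ∀ N, a N ^ ((1 : ℝ) / N) ≤ (max C 1 * ρ ^ N) ^ ((1 : ℝ) / N) := fun N =>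
    hmono (ha N) ((hup N).trans (by gcongr; exact le_max_left C 1)) N
  apply le_antisymm
  · calc limsup (fun N : ℕ => a N ^ ((1 : ℝ) / N)) atTop
        ≤ limsup (fun N : ℕ => (max C 1 * ρ ^ N) ^ ((1 : ℝ) / N)) atTop :=
          limsup_le_limsup (Eventually.of_forall hle)
            (isCoboundedUnder_le_of_le atTop fun N => Real.rpow_nonneg (ha N) _)
            hupper.isBoundedUnder_le
      _ = ρ := hupper.limsup_eq
  · calc ρ = liminf (fun N : ℕ => (ε * ρ ^ N) ^ ((1 : ℝ) / N)) atTop := hlower.liminf_eq.symm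
      _ ≤ limsup (fun N : ℕ => a N ^ ((1 : ℝ) / N)) atTop :=
          liminf_le_limsup_of_frequently_le
            (hlow.mono fun N hN => hmono (by positivity) hN N) hlower.isBoundedUnder_ge
            (hupper.isBoundedUnder_le.mono_le (Eventually.of_forall hle))

theorem power_sum_difference_limsup_general (α β : Multiset ℂ) (ρ : ℝ) (hρpos : 0 < ρ)
    (hbound : ∀ z ∈ α + β, ‖z‖ ≤ ρ)
    (hne : α.filter (fun z => ‖z‖ = ρ) ≠ β.filter (fun z => ‖z‖ = ρ)) :
    Filter.limsup
      (fun N : ℕ =>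
        ‖(α.map (fun z => z ^ N)).sum - (β.map (fun z => z ^ N)).sum‖
          ^ ((1 : ℝ) / N)) Filter.atTop = ρ := by
  have hα : ∀ z ∈ α, ‖z‖ ≤ ρ := fun z hz => hbound z (Multiset.mem_add.2 (.inl hz))
  have hβ : ∀ z ∈ β, ‖z‖ ≤ ρ := fun z hz => hbound z (Multiset.mem_add.2 (.inr hz))
  obtain ⟨v, hv⟩ : ∃ v, (α.filter (‖·‖ = ρ)).count v ≠ (β.filter (‖·‖ = ρ)).count v := by
    by_contra! h
    exact hne (Multiset.ext.2 h)
  have hvρ : ‖v‖ = ρ := by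
    by_contra h
    simp [h] at hv
  simp only [Multiset.count_filter, hvρ, if_true] at hv
  have hv0 : v ≠ 0 := norm_pos_iff.1 (hvρ ▸ hρpos)
  have hcesaro := (tendsto_cesaro_sum_map_pow_div α hv0 (hvρ ▸ hα)).sub
    (tendsto_cesaro_sum_map_pow_div β hv0 (hvρ ▸ hβ))
  simp only [← smul_sub, ← Finset.sum_sub_distrib, ← sub_div] at hcesaro
  obtain ⟨ε, hε, hfreq⟩ := exists_frequently_le_norm_of_tendsto_cesaro
    (sub_ne_zero.2 (by exact_mod_cast hv)) hcesaro
  refine limsup_rpow_one_div_eq (fun N => norm_nonneg _) hρpos.le hε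
    (C := Multiset.card α + Multiset.card β) (fun N => ?_) (hfreq.mono fun N hN => ?_)
  · calc _ ≤ _ := norm_sub_le _ _
      _ ≤ _ := add_le_add (norm_sum_map_pow_le α hα N) (norm_sum_map_pow_le β hβ N)
      _ = _ := by ring
  · rwa [norm_div, norm_pow, hvρ, le_div_iff₀ (by positivity)] at hN

/-- Let `α`, `β` be multisets of complex numbers, `ρ = max(max |α_k|, max |β_l|) > 0`,
and suppose the multisets of elements of modulus `ρ` in `α` and `β` differ. Then
`limsup_N |Σ α_k^N − Σ β_l^N|^{1/N} = ρ`. -/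
theorem power_sum_difference_limsup (α β : Multiset ℂ) (ρ : ℝ) (hρpos : 0 < ρ)
    (hbound : ∀ z ∈ α + β, ‖z‖ ≤ ρ)
    (hattained : ∃ z ∈ α + β, ‖z‖ = ρ)
    (hne : α.filter (fun z => ‖z‖ = ρ) ≠ β.filter (fun z => ‖z‖ = ρ)) :
    Filter.limsup
      (fun N : ℕ =>
        ‖(α.map (fun z => z ^ N)).sum - (β.map (fun z => z ^ N)).sum‖
          ^ ((1 : ℝ) / N)) Filter.atTop = ρ :=
  power_sum_difference_limsup_general α β ρ hρpos hbound hne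
end

section
/- Define the positive root system of the l-Kronecker quiver as Δ_{l+} = {(n,m) ∈ ℕ² \ {(0,0)} : n² + m² − l·n·m ≤ 1}. For l ≥ 3, the real roots (those with n² + m² − l·n·m = 1) are exactly (1,0), (0,1), and the pairs (n,m) with n,m ≥ 1, gcd(n,m) = 1, and n/m = (l ± √(l²−4+4/m²))/2. -/
/-!
Off the axes, `n² + m² − l n m = 1` is, after division by `m²`, the quadratic equation
`x² − l x + (1 − 1/m²) = 0` in `x = n/m`, whose discriminant is `l² − 4 + 4/m²`; this is
nonnegative once `l ≥ 2`, and the quadratic formula gives the two branches. Coprimality is forced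
by the equation itself, which is a Bézout relation `n · n + (m − l n) · m = 1`.
-/

theorem isCoprime_of_sq_add_sq_sub_mul_eq_one {R : Type*} [CommRing R] {a b c : R}
    (h : a ^ 2 + b ^ 2 - c * a * b = 1) : IsCoprime a b :=
  ⟨a, b - c * a, by linear_combination h⟩

theorem sq_add_sq_sub_mul_eq_one_iff_div_eq {l n m : ℝ} (hl : 2 ≤ l) (hm : m ≠ 0) :
    n ^ 2 + m ^ 2 - l * n * m = 1 ↔
      n / m = (l + √(l ^ 2 - 4 + 4 / m ^ 2)) / 2 ∨
        n / m = (l - √(l ^ 2 - 4 + 4 / m ^ 2)) / 2 := by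
  have hD : 0 ≤ l ^ 2 - 4 + 4 / m ^ 2 := by
    have : 0 ≤ 4 / m ^ 2 := by positivity
    nlinarith
  have hdiscrim : discrim 1 (-l) (1 - 1 / m ^ 2) =
      √(l ^ 2 - 4 + 4 / m ^ 2) * √(l ^ 2 - 4 + 4 / m ^ 2) := by
    rw [Real.mul_self_sqrt hD, discrim]
    ring
  have hquad := quadratic_eq_zero_iff one_ne_zero hdiscrim (n / m)
  simp only [neg_neg, mul_one, one_mul] at hquad
  rw [← hquad]
  field_simp
  constructor <;> intro h <;> linear_combination h

/-- For `l ≥ 3`, the real roots of the `l`-Kronecker quiver, i.e. pairs `(n,m) ∈ ℕ²`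
with `n² + m² − l·n·m = 1`, are exactly `(1,0)`, `(0,1)`, and the pairs with
`n, m ≥ 1`, `gcd(n,m) = 1` and `n/m = (l ± √(l² − 4 + 4/m²))/2`. -/
theorem kronecker_real_roots (l : ℕ) (hl : 3 ≤ l) :
    {p : ℕ × ℕ | (p.1 : ℤ) ^ 2 + (p.2 : ℤ) ^ 2 - (l : ℤ) * p.1 * p.2 = 1} =
      ({(1, 0), (0, 1)} : Set (ℕ × ℕ)) ∪
        {p : ℕ × ℕ | 1 ≤ p.1 ∧ 1 ≤ p.2 ∧ Nat.gcd p.1 p.2 = 1 ∧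
          ((p.1 : ℝ) / (p.2 : ℝ) =
              ((l : ℝ) + Real.sqrt ((l : ℝ) ^ 2 - 4 + 4 / (p.2 : ℝ) ^ 2)) / 2 ∨
           (p.1 : ℝ) / (p.2 : ℝ) =
              ((l : ℝ) - Real.sqrt ((l : ℝ) ^ 2 - 4 + 4 / (p.2 : ℝ) ^ 2)) / 2)} := by
  ext ⟨n, m⟩
  simp only [Set.mem_ofPred_eq, Set.mem_union, Set.mem_insert_iff, Set.mem_singleton_iff,
    Prod.mk.injEq]
  rcases Nat.eq_zero_or_pos m with rfl | hm
  · simp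
  rcases Nat.eq_zero_or_pos n with rfl | hn
  · simp
  have hl2 : (2 : ℝ) ≤ l := by exact_mod_cast (by omega : 2 ≤ l)
  rw [← sq_add_sq_sub_mul_eq_one_iff_div_eq hl2 (by positivity)]
  constructor
  · intro h
    exact Or.inr ⟨hn, hm, Nat.isCoprime_iff_coprime.mp (isCoprime_of_sq_add_sq_sub_mul_eq_one h),
      by exact_mod_cast h⟩
  · rintro ((⟨rfl, rfl⟩ | ⟨rfl, rfl⟩) | ⟨-, -, -, h⟩)
    · omega
    · omega
    · exact_mod_cast h
end

section
/- Let z₁ = r₁e^{iφ₁}, z₂ = r₂e^{iφ₂} with r₁, r₂ > 0 and 0 < φ₂ < φ₁ ≤ π. Define f : [0,∞) → ℝ by f(x) = arccos((x r₁ cos φ₁ + r₂ cos φ₂)/√(x²r₁² + r₂² + 2x r₁ r₂ cos(φ₁−φ₂))). Then f is strictly increasing, f(0) = φ₂, lim_{x→∞} f(x) = φ₁, and for all α ≥ 0, β > 0, (αz₁ + βz₂)/|αz₁ + βz₂| = e^{i f(α/β)}. -/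
/-!
For `x ≥ 0` the point `x z₁ + z₂` lies in the open upper half plane, where
`arg = arccos (re / ‖·‖)`; the formula for `f` is exactly this, so `f x = arg (x z₁ + z₂)`.
Monotonicity: `Im (conj (x z₁ + z₂) * (y z₁ + z₂)) = (y - x) r₁ r₂ sin (φ₁ - φ₂) > 0`, i.e. the
sine of the angle from the first point to the second is positive. For the limit, `arccos (re / ‖·‖)`
is invariant under positive scaling and, unlike `arg` when `φ₁ = π`, continuous at `z₁`, while
`(x z₁ + z₂) / x → z₁`.
-/

open Real Filter
open ComplexConjugate

namespace Complex

theorem arg_ofReal_mul_exp_mul_I {r θ : ℝ} (hr : 0 < r) (hθ : θ ∈ Set.Ioc (-π) π) :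
    arg (r * exp (θ * I)) = θ := by
  rw [arg_real_mul _ hr, arg_exp_mul_I, toIocMod_eq_self]
  rwa [neg_add_eq_sub, two_mul, add_sub_cancel_right]

theorem div_norm_eq_exp_arg_mul_I {z : ℂ} (hz : z ≠ 0) : z / ‖z‖ = exp (arg z * I) := by
  rw [div_eq_iff (ofReal_ne_zero.2 (norm_ne_zero_iff.2 hz)), mul_comm, norm_mul_exp_arg_mul_I]

theorem div_norm_ofReal_mul_add_ofReal_mul {α β : ℝ} (hβ : 0 < β) {z w : ℂ}
    (h : ((α / β : ℝ) : ℂ) * z + w ≠ 0) :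
    (α * z + β * w) / ‖α * z + β * w‖ = exp (arg (((α / β : ℝ) : ℂ) * z + w) * I) := by
  have hβ₀ : (β : ℂ) ≠ 0 := ofReal_ne_zero.2 hβ.ne'
  have hsum : (α : ℂ) * z + β * w = β * (((α / β : ℝ) : ℂ) * z + w) := by
    push_cast; field_simp
  rw [hsum, div_norm_eq_exp_arg_mul_I (mul_ne_zero hβ₀ h), arg_real_mul _ hβ]

theorem re_ofReal_mul_exp_add (a b φ ψ : ℝ) :
    (a * exp (φ * I) + b * exp (ψ * I)).re = a * Real.cos φ + b * Real.cos ψ := by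
  simp [exp_ofReal_mul_I_re]

theorem norm_ofReal_mul_exp_add (a b φ ψ : ℝ) :
    ‖a * exp (φ * I) + b * exp (ψ * I)‖ = √(a ^ 2 + b ^ 2 + 2 * a * b * Real.cos (φ - ψ)) := by
  rw [norm_def, normSq_apply]
  simp only [add_re, mul_re, ofReal_re, exp_ofReal_mul_I_re, ofReal_im, exp_ofReal_mul_I_im,
    zero_mul, sub_zero, add_im, mul_im, add_zero]
  congr 1
  rw [Real.cos_sub]
  linear_combination a ^ 2 * Real.sin_sq_add_cos_sq φ + b ^ 2 * Real.sin_sq_add_cos_sq ψ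

theorem im_conj_ofReal_mul_exp_mul (a b φ ψ : ℝ) :
    (conj (b * exp (ψ * I)) * (a * exp (φ * I))).im = a * b * Real.sin (φ - ψ) := by
  simp only [map_mul, conj_ofReal, mul_im, mul_re, ofReal_re, conj_re, exp_ofReal_mul_I_re,
    ofReal_im, conj_im, exp_ofReal_mul_I_im, mul_neg, zero_mul, neg_zero, sub_zero, add_zero,
    neg_mul, Real.sin_sub]
  ring

theorem im_conj_mul_ofReal_mul_add (z w : ℂ) (x y : ℝ) :
    (conj (x * z + w) * (y * z + w)).im = (y - x) * (conj w * z).im := by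
  simp only [map_add, map_mul, conj_ofReal, mul_im, add_re, mul_re, ofReal_re, conj_re, ofReal_im,
    conj_im, mul_neg, zero_mul, neg_zero, sub_zero, add_im, add_zero, neg_mul]
  ring

theorem arg_lt_arg_of_im_conj_mul_pos {u v : ℂ} (hu : 0 ≤ u.im) (hv : 0 ≤ v.im)
    (h : 0 < (conj u * v).im) : arg u < arg v := by
  have hu₀ : u ≠ 0 := by rintro rfl; simp at h
  have hv₀ : v ≠ 0 := by rintro rfl; simp at h
  have hsin : 0 < Real.sin (arg v - arg u) := by
    have : Real.sin (arg v - arg u) = (conj u * v).im / (‖u‖ * ‖v‖) := by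
      rw [Real.sin_sub, sin_arg, sin_arg, cos_arg hu₀, cos_arg hv₀]
      simp only [mul_im, conj_re, conj_im, neg_mul]
      field_simp
      ring
    rw [this]
    positivity
  by_contra! hle
  have := Real.sin_nonpos_of_nonpos_of_neg_pi_le (sub_nonpos.2 hle)
    (by linarith [arg_nonneg_iff.2 hv, arg_le_pi u])
  linarith

theorem strictMonoOn_arg_ofReal_mul_add {z w : ℂ} (hz : 0 ≤ z.im) (hw : 0 ≤ w.im)
    (h : 0 < (conj w * z).im) : StrictMonoOn (fun x : ℝ => arg (x * z + w)) (Set.Ici 0) := by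
  intro x hx y _ hxy
  have him : ∀ t : ℝ, 0 ≤ t → 0 ≤ ((t : ℂ) * z + w).im := fun t ht => by
    simpa using add_nonneg (mul_nonneg ht hz) hw
  refine arg_lt_arg_of_im_conj_mul_pos (him x hx) (him y (le_trans hx hxy.le)) ?_
  rw [im_conj_mul_ofReal_mul_add]
  exact mul_pos (sub_pos.2 hxy) h

theorem tendsto_arccos_re_div_norm_ofReal_mul_add {z : ℂ} (hz : z ≠ 0) (w : ℂ) :
    Tendsto (fun x : ℝ => arccos ((x * z + w).re / ‖x * z + w‖)) atTop
      (nhds (arccos (z.re / ‖z‖))) := by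
  have hcont : ContinuousAt (fun u : ℂ => arccos (u.re / ‖u‖)) z :=
    continuous_arccos.continuousAt.comp
      (continuous_re.continuousAt.div continuous_norm.continuousAt (norm_ne_zero_iff.2 hz))
  have hlim : Tendsto (fun x : ℝ => z + (x : ℂ)⁻¹ * w) atTop (nhds z) := by
    have := ((continuous_ofReal.tendsto 0).comp tendsto_inv_atTop_zero).mul_const w
    simpa using this.const_add z
  refine (hcont.tendsto.comp hlim).congr' ?_
  filter_upwards [eventually_gt_atTop 0] with x hx
  have hx' : (x : ℂ) ≠ 0 := ofReal_ne_zero.2 hx.ne'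
  have : (x : ℂ) * z + w = x * (z + (x : ℂ)⁻¹ * w) := by field_simp
  simp only [Function.comp_apply]
  rw [this, re_ofReal_mul, norm_mul, norm_real, Real.norm_of_nonneg hx.le,
    mul_div_mul_left _ _ hx.ne']

end Complex

/-- Let `z₁ = r₁e^{iφ₁}`, `z₂ = r₂e^{iφ₂}` with `r₁, r₂ > 0` and `0 < φ₂ < φ₁ ≤ π`, and
`f(x) = arccos((x r₁ cos φ₁ + r₂ cos φ₂)/√(x²r₁² + r₂² + 2x r₁ r₂ cos(φ₁−φ₂)))`.
Then `f` is strictly increasing on `[0,∞)`, `f(0) = φ₂`, `f(x) → φ₁` as `x → ∞`, and for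
`α ≥ 0`, `β > 0`, `(αz₁ + βz₂)/|αz₁ + βz₂| = e^{i f(α/β)}`. -/
theorem argument_function_properties (r₁ r₂ φ₁ φ₂ : ℝ)
    (hr₁ : 0 < r₁) (hr₂ : 0 < r₂) (hφ₂ : 0 < φ₂) (hφ : φ₂ < φ₁) (hφ₁ : φ₁ ≤ π)
    (f : ℝ → ℝ)
    (hf : ∀ x, f x = Real.arccos ((x * r₁ * Real.cos φ₁ + r₂ * Real.cos φ₂) /
      Real.sqrt (x ^ 2 * r₁ ^ 2 + r₂ ^ 2 + 2 * x * r₁ * r₂ * Real.cos (φ₁ - φ₂)))) :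
    StrictMonoOn f (Set.Ici 0) ∧ f 0 = φ₂ ∧
    Filter.Tendsto f Filter.atTop (nhds φ₁) ∧
    ∀ α β : ℝ, 0 ≤ α → 0 < β →
      ((α : ℂ) * ((r₁ : ℂ) * Complex.exp ((φ₁ : ℂ) * Complex.I)) +
        (β : ℂ) * ((r₂ : ℂ) * Complex.exp ((φ₂ : ℂ) * Complex.I))) /
        ((‖(α : ℂ) * ((r₁ : ℂ) * Complex.exp ((φ₁ : ℂ) * Complex.I)) +
          (β : ℂ) * ((r₂ : ℂ) * Complex.exp ((φ₂ : ℂ) * Complex.I))‖ : ℝ) : ℂ) =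
        Complex.exp ((f (α / β) : ℂ) * Complex.I) := by
  set z₁ : ℂ := r₁ * Complex.exp (φ₁ * Complex.I)
  set z₂ : ℂ := r₂ * Complex.exp (φ₂ * Complex.I)
  have hz₁ : 0 ≤ z₁.im := by
    simpa [z₁, Complex.exp_ofReal_mul_I_im] using
      mul_nonneg hr₁.le (sin_nonneg_of_nonneg_of_le_pi (hφ₂.trans hφ).le hφ₁)
  have hz₂ : 0 < z₂.im := by
    simpa [z₂, Complex.exp_ofReal_mul_I_im] using
      mul_pos hr₂ (sin_pos_of_pos_of_lt_pi hφ₂ (hφ.trans_le hφ₁))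
  have hz₁z₂ : 0 < (conj z₂ * z₁).im := by
    rw [Complex.im_conj_ofReal_mul_exp_mul]
    exact mul_pos (mul_pos hr₁ hr₂) (sin_pos_of_pos_of_lt_pi (sub_pos.2 hφ) (by linarith))
  have hf_arccos : ∀ x : ℝ, f x = arccos ((x * z₁ + z₂).re / ‖x * z₁ + z₂‖) := fun x => by
    have : (x : ℂ) * z₁ + z₂ = ((x * r₁ : ℝ) : ℂ) * Complex.exp (φ₁ * Complex.I) + z₂ := by
      push_cast; ring
    rw [hf, this, Complex.re_ofReal_mul_exp_add, Complex.norm_ofReal_mul_exp_add]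
    ring_nf
  have him : ∀ x : ℝ, 0 ≤ x → 0 < ((x : ℂ) * z₁ + z₂).im := fun x hx => by
    simpa using add_pos_of_nonneg_of_pos (mul_nonneg hx hz₁) hz₂
  have hf_arg : ∀ x : ℝ, 0 ≤ x → f x = Complex.arg (x * z₁ + z₂) := fun x hx => by
    rw [hf_arccos, Complex.arg_of_im_pos (him x hx)]
  have harg₁ : Complex.arg z₁ = φ₁ := Complex.arg_ofReal_mul_exp_mul_I hr₁ ⟨by linarith, hφ₁⟩
  have harg₂ : Complex.arg z₂ = φ₂ :=
    Complex.arg_ofReal_mul_exp_mul_I hr₂ ⟨by linarith, by linarith⟩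
  refine ⟨?_, ?_, ?_, ?_⟩
  · intro x hx y hy hxy
    rw [hf_arg x hx, hf_arg y hy]
    exact Complex.strictMonoOn_arg_ofReal_mul_add hz₁ hz₂.le hz₁z₂ hx hy hxy
  · simpa [harg₂] using hf_arg 0 le_rfl
  · have hz₁₀ : z₁ ≠ 0 := by rintro h; simp [h] at hz₁z₂
    rw [← harg₁, Complex.arg_of_im_nonneg_of_ne_zero hz₁ hz₁₀]
    exact (Complex.tendsto_arccos_re_div_norm_ofReal_mul_add hz₁₀ z₂).congr
      fun x => (hf_arccos x).symm
  · intro α β hα hβ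
    have hq : 0 ≤ α / β := div_nonneg hα hβ.le
    have hw : ((α / β : ℝ) : ℂ) * z₁ + z₂ ≠ 0 := fun h =>
      (him _ hq).ne' (by rw [h, Complex.zero_im])
    rw [Complex.div_norm_ofReal_mul_add_ofReal_mul hβ hw, hf_arg _ hq]
end

section
/- Let M be a matrix over a field such that the bipartite graph on its rows and columns, with an edge between row i and column j whenever M_{ij} ≠ 0, is a forest (contains no cycles). Then the rank of M is determined by the set of positions of the nonzero entries alone: any two such matrices with the same nonzero pattern (and forest condition) have equal rank; in fact rank(M) equals the matching number of the bipartite graph. -/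
open Function Matrix

namespace ForestRank

variable {K : Type} [Field K] {a b : ℕ}

/-- Adjacency in the support graph. -/
lemma adj_of_ne {M : Matrix (Fin a) (Fin b) K} {x : Fin a} {y : Fin b} (h : M x y ≠ 0) :
    (SimpleGraph.fromRel
      (fun u v : Fin a ⊕ Fin b =>
        ∃ i j, u = Sum.inl i ∧ v = Sum.inr j ∧ M i j ≠ 0)).Adj (Sum.inl x) (Sum.inr y) := by
  rw [SimpleGraph.fromRel_adj]
  exact ⟨by simp, Or.inl ⟨x, y, rfl, rfl, h⟩⟩

/-- In a forest-supported matrix, the only permutation all of whose "matching shifted"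
entries are nonzero is the identity. -/
lemma perm_eq_one {M : Matrix (Fin a) (Fin b) K}
    (hforest : (SimpleGraph.fromRel
      (fun u v : Fin a ⊕ Fin b =>
        ∃ i j, u = Sum.inl i ∧ v = Sum.inr j ∧ M i j ≠ 0)).IsAcyclic)
    {k : ℕ} {r : Fin k → Fin a} {c : Fin k → Fin b}
    (hr : Function.Injective r) (hc : Function.Injective c)
    (hm : ∀ i, M (r i) (c i) ≠ 0) (σ : Equiv.Perm (Fin k))
    (hσ : ∀ i, M (r i) (c (σ i)) ≠ 0) : σ = 1 := by
  by_contra hne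
  obtain ⟨i₀, hi₀⟩ : ∃ i, σ i ≠ i := by
    by_contra h
    push_neg at h
    exact hne (Equiv.ext fun x => h x)
  set G := (SimpleGraph.fromRel
      (fun u v : Fin a ⊕ Fin b =>
        ∃ i j, u = Sum.inl i ∧ v = Sum.inr j ∧ M i j ≠ 0)) with hG
  set f : Fin k → Fin k := ⇑σ with hf
  have hper : Function.IsPeriodicPt f (orderOf σ) i₀ := by
    show f^[orderOf σ] i₀ = i₀
    rw [hf, ← Equiv.Perm.coe_pow, pow_orderOf_eq_one]
    rfl
  set m := Function.minimalPeriod f i₀ with hmdef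
  have hmpos : 0 < m := hper.minimalPeriod_pos (orderOf_pos σ)
  have hm1 : m ≠ 1 := by
    intro h
    exact hi₀ (Function.minimalPeriod_eq_one_iff_isFixedPt.mp h)
  have hm2 : 2 ≤ m := by omega
  have hmm : f^[m] i₀ = i₀ := Function.iterate_minimalPeriod
  have hinj : Set.InjOn (f^[·] i₀) (Set.Iio m) :=
    Function.iterate_injOn_Iio_minimalPeriod
  have hdist : ∀ {j x : ℕ}, 1 ≤ j → j < x → x ≤ m → f^[j] i₀ ≠ f^[x] i₀ := by
    intro j x hj hjx hxm heq
    rcases eq_or_lt_of_le hxm with h | h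
    · subst h
      rw [hmm] at heq
      have : j = 0 := hinj (by exact lt_of_lt_of_le hjx le_rfl) hmpos
        (by simpa using heq)
      omega
    · exact absurd (hinj (lt_trans hjx h) h heq) (by omega)
  -- the σ-edge: M (r x) (c (f^[t+1] i₀)) ≠ 0 for x = f^[t] i₀
  have hstep : ∀ t : ℕ, M (r (f^[t] i₀)) (c (f^[t+1] i₀)) ≠ 0 := by
    intro t
    rw [Function.iterate_succ_apply']
    exact hσ (f^[t] i₀)
  have claim : ∀ t, t + 1 ≤ m →
      ∃ W : G.Walk (Sum.inl (r (f^[t+1] i₀))) (Sum.inr (c (f^[1] i₀))),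
        W.IsPath ∧ W.length = 2 * t + 1 ∧
        ∀ x ∈ W.support, ∃ j, 1 ≤ j ∧ j ≤ t + 1 ∧
          (x = Sum.inl (r (f^[j] i₀)) ∨ x = Sum.inr (c (f^[j] i₀))) := by
    intro t
    induction t with
    | zero =>
      intro _
      have hadj : G.Adj (Sum.inl (r (f^[1] i₀))) (Sum.inr (c (f^[1] i₀))) :=
        adj_of_ne (hm (f^[1] i₀))
      refine ⟨SimpleGraph.Walk.cons hadj SimpleGraph.Walk.nil, ?_, rfl, ?_⟩
      · exact SimpleGraph.Walk.IsPath.nil.cons (by simp)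
      · intro x hx
        simp only [SimpleGraph.Walk.support_cons, SimpleGraph.Walk.support_nil,
          List.mem_cons, List.mem_singleton] at hx
        rcases hx with h | h | h
        · exact ⟨1, le_rfl, le_rfl, Or.inl h⟩
        · exact ⟨1, le_rfl, le_rfl, Or.inr h⟩
        · exact absurd h (by simp)
    | succ t ih =>
      intro ht
      obtain ⟨W, hp, hlen, hsupp⟩ := ih (by omega)
      have e1 : G.Adj (Sum.inr (c (f^[t+2] i₀))) (Sum.inl (r (f^[t+1] i₀))) :=
        (adj_of_ne (hstep (t+1))).symm
      have e2 : G.Adj (Sum.inl (r (f^[t+2] i₀))) (Sum.inr (c (f^[t+2] i₀))) :=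
        adj_of_ne (hm (f^[t+2] i₀))
      have hu2 : (Sum.inr (c (f^[t+2] i₀)) : Fin a ⊕ Fin b) ∉ W.support := by
        intro hmem
        obtain ⟨j, hj1, hj2, hj3 | hj3⟩ := hsupp _ hmem
        · exact absurd hj3 (by simp)
        · have : c (f^[t+2] i₀) = c (f^[j] i₀) := by
            simpa using hj3
          exact hdist hj1 (by omega) (by omega) (hc this).symm
      have hu3 : (Sum.inl (r (f^[t+2] i₀)) : Fin a ⊕ Fin b) ∉
          (SimpleGraph.Walk.cons e1 W).support := by
        rw [SimpleGraph.Walk.support_cons]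
        intro hmem
        rcases List.mem_cons.mp hmem with h | h
        · exact absurd h (by simp)
        · obtain ⟨j, hj1, hj2, hj3 | hj3⟩ := hsupp _ h
          · have : r (f^[t+2] i₀) = r (f^[j] i₀) := by
              simpa using hj3
            exact hdist hj1 (by omega) (by omega) (hr this).symm
          · exact absurd hj3 (by simp)
      refine ⟨SimpleGraph.Walk.cons e2 (SimpleGraph.Walk.cons e1 W),
        (hp.cons hu2).cons hu3, ?_, ?_⟩
      · simp only [SimpleGraph.Walk.length_cons, hlen]; omega
      · intro x hx
        simp only [SimpleGraph.Walk.support_cons, List.mem_cons] at hx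
        rcases hx with h | h | h
        · exact ⟨t + 2, by omega, by omega, Or.inl h⟩
        · exact ⟨t + 2, by omega, by omega, Or.inr h⟩
        · obtain ⟨j, hj1, hj2, hj3⟩ := hsupp _ h
          exact ⟨j, hj1, by omega, hj3⟩
  obtain ⟨W, hp, hlen, -⟩ := claim (m - 1) (by omega)
  have hend : f^[m - 1 + 1] i₀ = i₀ := by
    have h1 : m - 1 + 1 = m := by omega
    rw [h1]; exact hmm
  have hadjfin : G.Adj (Sum.inl (r (f^[m - 1 + 1] i₀))) (Sum.inr (c (f^[1] i₀))) := by
    rw [hend]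
    exact adj_of_ne (by simpa using hσ i₀)
  have heq := hforest.path_unique (SimpleGraph.Path.singleton hadjfin) ⟨W, hp⟩
  have hlen' : (SimpleGraph.Path.singleton hadjfin :
      G.Walk (Sum.inl (r (f^[m - 1 + 1] i₀))) (Sum.inr (c (f^[1] i₀)))).length = W.length := by
    rw [heq]
  rw [hlen] at hlen'
  simp only [SimpleGraph.Path.singleton] at hlen'
  simp only [SimpleGraph.Walk.length_cons, SimpleGraph.Walk.length_nil] at hlen'
  omega

/-- The determinant of a matching submatrix is nonzero. -/
lemma det_matching_ne_zero {M : Matrix (Fin a) (Fin b) K}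
    (hforest : (SimpleGraph.fromRel
      (fun u v : Fin a ⊕ Fin b =>
        ∃ i j, u = Sum.inl i ∧ v = Sum.inr j ∧ M i j ≠ 0)).IsAcyclic)
    {k : ℕ} {r : Fin k → Fin a} {c : Fin k → Fin b}
    (hr : Function.Injective r) (hc : Function.Injective c)
    (hm : ∀ i, M (r i) (c i) ≠ 0) :
    (M.submatrix r c).det ≠ 0 := by
  rw [Matrix.det_apply]
  rw [Finset.sum_eq_single_of_mem (1 : Equiv.Perm (Fin k)) (Finset.mem_univ _)]
  · simp only [Equiv.Perm.sign_one, one_smul, Equiv.Perm.one_apply, Matrix.submatrix_apply]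
    rw [Finset.prod_ne_zero_iff]
    exact fun i _ => hm i
  · intro σ _ hσ1
    by_contra hterm
    have hprod : ∏ i, (M.submatrix r c) (σ i) i ≠ 0 := by
      intro h
      rw [h, smul_zero] at hterm
      exact hterm rfl
    rw [Finset.prod_ne_zero_iff] at hprod
    have hτ : ∀ i, M (r i) (c (σ⁻¹ i)) ≠ 0 := by
      intro i
      have := hprod (σ⁻¹ i) (Finset.mem_univ _)
      simpa [Matrix.submatrix_apply] using this
    have := perm_eq_one hforest hr hc hm σ⁻¹ hτ
    exact hσ1 (by rwa [inv_eq_one] at this)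

/-- Any matrix submatrix obtained by arbitrary row/column selections has rank at most
the original rank. -/
lemma rank_submatrix_le' {M : Matrix (Fin a) (Fin b) K} {k : ℕ}
    (r : Fin k → Fin a) (c : Fin k → Fin b) :
    (M.submatrix r c).rank ≤ M.rank := by
  have hEq : M.submatrix r c =
      (1 : Matrix (Fin a) (Fin a) K).submatrix r id * M *
        (1 : Matrix (Fin b) (Fin b) K).submatrix id c := by
    ext i j
    simp [Matrix.mul_apply, Matrix.one_apply, Finset.sum_ite_eq, Finset.sum_ite_eq']
  rw [hEq]
  exact (Matrix.rank_mul_le_left _ _).trans (Matrix.rank_mul_le_right _ _)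

/-- Column extraction: a matrix of rank `k` has `k` columns which are linearly
independent. -/
lemma exists_cols {m n : Type} [Fintype m] [Fintype n] (A : Matrix m n K) {k : ℕ}
    (hk : A.rank = k) :
    ∃ c : Fin k → n, Function.Injective c ∧ LinearIndependent K (fun i => Aᵀ (c i)) := by
  obtain ⟨bset, hsub, hspan, hind⟩ := exists_linearIndependent K (Set.range Aᵀ)
  have hfin : bset.Finite := (Set.finite_range Aᵀ).subset hsub
  have : Fintype bset := hfin.fintype
  have hcard : Fintype.card bset = k := by
    rw [← Set.toFinset_card, ← hk, Matrix.rank_eq_finrank_span_cols]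
    change _ = Module.finrank K (Submodule.span K (Set.range Aᵀ))
    rw [← hspan,
      finrank_span_set_eq_card hind]
  let e : Fin k ≃ bset := (Fintype.equivFinOfCardEq hcard).symm
  choose g hg using fun v : bset => hsub v.2
  refine ⟨fun i => g (e i), ?_, ?_⟩
  · intro i j hij
    have hij' : g (e i) = g (e j) := hij
    apply e.injective
    apply Subtype.ext
    rw [← hg (e i), ← hg (e j), hij']
  · have heq : (fun i => Aᵀ (g (e i))) = (fun v : bset => (v : m → K)) ∘ e := by
      funext i
      simp only [Function.comp_apply, hg (e i)]
    rw [heq]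
    exact hind.comp e e.injective

end ForestRank

open ForestRank in
/-- Let `M` be a matrix over a field whose bipartite support graph (an edge between row
`i` and column `j` whenever `M i j ≠ 0`) is a forest. Then the rank of `M` equals the
matching number of that graph: the maximal cardinality of a set of positions `(i,j)` with
`M i j ≠ 0`, no two sharing a row or a column. -/
theorem forest_support_rank_eq_matching (K : Type) [Field K] (a b : ℕ)
    (M : Matrix (Fin a) (Fin b) K)
    (hforest : (SimpleGraph.fromRel
      (fun u v : Fin a ⊕ Fin b =>
        ∃ i j, u = Sum.inl i ∧ v = Sum.inr j ∧ M i j ≠ 0)).IsAcyclic) :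
    M.rank = sSup {k : ℕ | ∃ s : Finset (Fin a × Fin b), s.card = k ∧
      (∀ p ∈ s, M p.1 p.2 ≠ 0) ∧
      Set.InjOn Prod.fst (s : Set (Fin a × Fin b)) ∧
      Set.InjOn Prod.snd (s : Set (Fin a × Fin b))} := by
  classical
  set S := {k : ℕ | ∃ s : Finset (Fin a × Fin b), s.card = k ∧
      (∀ p ∈ s, M p.1 p.2 ≠ 0) ∧
      Set.InjOn Prod.fst (s : Set (Fin a × Fin b)) ∧
      Set.InjOn Prod.snd (s : Set (Fin a × Fin b))} with hS
  -- every matching size is at most the rank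
  have hbound : ∀ x ∈ S, x ≤ M.rank := by
    rintro x ⟨s, hcard, hent, hfst, hsnd⟩
    subst hcard
    set e : Fin s.card ≃ s := s.equivFin.symm with he
    set r : Fin s.card → Fin a := fun i => ((e i : Fin a × Fin b)).1 with hrdef
    set c : Fin s.card → Fin b := fun i => ((e i : Fin a × Fin b)).2 with hcdef
    have hr : Function.Injective r := by
      intro i j hij
      apply e.injective
      apply Subtype.ext
      exact hfst (e i).2 (e j).2 hij
    have hc : Function.Injective c := by
      intro i j hij
      apply e.injective
      apply Subtype.ext
      exact hsnd (e i).2 (e j).2 hij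
    have hm : ∀ i, M (r i) (c i) ≠ 0 := fun i => hent _ (e i).2
    have hdet := det_matching_ne_zero hforest hr hc hm
    have hunit : IsUnit (M.submatrix r c) :=
      (Matrix.isUnit_iff_isUnit_det _).mpr (isUnit_iff_ne_zero.mpr hdet)
    have hrank : (M.submatrix r c).rank = s.card := by
      rw [Matrix.rank_of_isUnit _ hunit, Fintype.card_fin]
    calc s.card = (M.submatrix r c).rank := hrank.symm
      _ ≤ M.rank := rank_submatrix_le' r c
  -- the rank itself is a matching size
  have hmem : M.rank ∈ S := by
    obtain ⟨c, hcinj, hcind⟩ := exists_cols M rfl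
    set N : Matrix (Fin a) (Fin M.rank) K := M.submatrix id c with hN
    have hNrank : N.rank = M.rank := by
      rw [Matrix.rank_eq_finrank_span_cols]
      have hNT : Nᵀ = fun i => Mᵀ (c i) := rfl
      change Module.finrank K (Submodule.span K (Set.range Nᵀ)) = M.rank
      rw [hNT, finrank_span_eq_card hcind, Fintype.card_fin]
    have hNTrank : Nᵀ.rank = M.rank := by rw [Matrix.rank_transpose, hNrank]
    obtain ⟨ρ, hρinj, hρind⟩ := exists_cols Nᵀ hNTrank
    set P : Matrix (Fin M.rank) (Fin M.rank) K := M.submatrix ρ c with hP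
    have hProws : (fun i => P i) = fun i => Nᵀᵀ (ρ i) := rfl
    have hPunit : IsUnit P := by
      rw [← Matrix.linearIndependent_rows_iff_isUnit]
      change LinearIndependent K (fun i => P i)
      rw [hProws]
      exact hρind
    have hPdet : P.det ≠ 0 := by
      have := (Matrix.isUnit_iff_isUnit_det _).mp hPunit
      exact this.ne_zero
    obtain ⟨σ, hσ⟩ : ∃ σ : Equiv.Perm (Fin M.rank), ∀ i, P (σ i) i ≠ 0 := by
      by_contra h
      push_neg at h
      apply hPdet
      rw [Matrix.det_apply]
      apply Finset.sum_eq_zero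
      intro σ _
      obtain ⟨i, hi⟩ := h σ
      rw [show (∏ j, P (σ j) j) = 0 from Finset.prod_eq_zero (Finset.mem_univ i) hi, smul_zero]
    refine ⟨Finset.image (fun i => (ρ (σ i), c i)) Finset.univ, ?_, ?_, ?_, ?_⟩
    · rw [Finset.card_image_of_injective _ (fun i j hij => hcinj (congrArg Prod.snd hij)),
        Finset.card_univ, Fintype.card_fin]
    · intro p hp
      obtain ⟨i, _, rfl⟩ := Finset.mem_image.mp hp
      exact hσ i
    · intro p hp q hq hpq
      simp only [Finset.coe_image, Set.mem_image] at hp hq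
      obtain ⟨i, -, rfl⟩ := hp
      obtain ⟨j, -, rfl⟩ := hq
      simp only at hpq
      have : i = j := σ.injective (hρinj hpq)
      rw [this]
    · intro p hp q hq hpq
      simp only [Finset.coe_image, Set.mem_image] at hp hq
      obtain ⟨i, -, rfl⟩ := hp
      obtain ⟨j, -, rfl⟩ := hq
      simp only at hpq
      have : i = j := hcinj hpq
      rw [this]
  exact le_antisymm (le_csSup ⟨M.rank, hbound⟩ hmem) (csSup_le ⟨M.rank, hmem⟩ hbound)
end
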